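/- In X_G, for any free ultrafilter p on X and any g ∈ G, the ultrafilter gp = {gP : P ∈ p} is parallel to p; conversely, if p and q are parallel free ultrafilters on X_G then q = gp for some g ∈ G. Hence the parallelity class of p equals the orbit Gp. -/

import Mathlib

open Set

/-- A coarse structure on a set `X`. -/
structure CoarseStructure (X : Type*) where
  sets : Set (Set (X × X))
  diagonal_mem : ∀ E ∈ sets, ∀ x : X, (x, x) ∈ E
  comp_mem : ∀ E ∈ sets, ∀ E' ∈ sets,
    {q : X × X | ∃ z : X, (q.1, z) ∈ E ∧ (z, q.2) ∈ E'} ∈ sets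
  inv_mem : ∀ E ∈ sets, {q : X × X | (q.2, q.1) ∈ E} ∈ sets
  subset_mem : ∀ E ∈ sets, ∀ E', E' ⊆ E → (∀ x : X, (x, x) ∈ E') → E' ∈ sets
  covers : ⋃₀ sets = Set.univ

/-- The ball `E[A]`. -/
def ball {X : Type*} (E : Set (X × X)) (A : Set X) : Set X := {y | ∃ a ∈ A, (a, y) ∈ E}

/-- A bounded subset of a coarse space. -/
def CoarseStructure.Bounded {X : Type*} (C : CoarseStructure X) (B : Set X) : Prop :=
  ∃ E ∈ C.sets, ∃ x : X, B ⊆ ball E {x}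

/-- A finitary coarse space: uniformly finite balls. -/
def CoarseStructure.Finitary {X : Type*} (C : CoarseStructure X) : Prop :=
  ∀ E ∈ C.sets, ∃ n : ℕ, ∀ x : X, (ball E {x}).Finite ∧ (ball E {x}).ncard < n

/-- The set `X^♯` of ultrafilters all of whose members are unbounded. -/
def CoarseStructure.Sharp {X : Type*} (C : CoarseStructure X) : Set (Ultrafilter X) :=
  {p | ∀ P ∈ p, ¬ C.Bounded P}

/-- The parallelity relation on ultrafilters. -/
def CoarseStructure.Parallel {X : Type*} (C : CoarseStructure X) (p q : Ultrafilter X) : Prop :=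
  ∃ E ∈ C.sets, ∀ P ∈ p, ball E P ∈ q

/-- The entourage determined by a set of permutations. -/
def entourage {X : Type*} (F : Set (Equiv.Perm X)) : Set (X × X) :=
  {q | ∃ g ∈ F, q.2 = g q.1}

/-- The finitary coarse structure `X_G` determined by a group `G` of permutations of `X`:
its entourages are the diagonal-containing subsets of `{(x,gx) : x ∈ X, g ∈ F}`
for finite `F ⊆ G` with `id ∈ F`. -/
def XGsets {X : Type*} (G : Subgroup (Equiv.Perm X)) : Set (Set (X × X)) :=
  {E | (∀ x : X, (x, x) ∈ E) ∧ ∃ F : Finset (Equiv.Perm X),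
    (1 : Equiv.Perm X) ∈ F ∧ ↑F ⊆ (G : Set (Equiv.Perm X)) ∧ E ⊆ entourage ↑F}

/-- A free ultrafilter. -/
def IsFree {X : Type*} (p : Ultrafilter X) : Prop := (p : Filter X) ≤ Filter.cofinite

/-- `X*`, the space of free ultrafilters with the Stone topology. -/
def FreeUF (X : Type*) : Type _ := {p : Ultrafilter X // IsFree p}

instance (X : Type*) : TopologicalSpace (FreeUF X) :=
  instTopologicalSpaceSubtype

/-- The orbit `Gp` of an ultrafilter under the induced action `gp = {gP : P ∈ p}`. -/
def ufOrbit {X : Type*} (G : Subgroup (Equiv.Perm X)) (p : Ultrafilter X) :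
    Set (Ultrafilter X) :=
  {q | ∃ g ∈ G, q = Ultrafilter.map (⇑g) p}

/-- The `p`-companion `Δ_p(A) = A* ∩ Gp`. -/
def compan {X : Type*} (G : Subgroup (Equiv.Perm X)) (p : Ultrafilter X) (A : Set X) :
    Set (Ultrafilter X) :=
  {q | A ∈ q ∧ q ∈ ufOrbit G p}

/-- Large subsets of `X_G`. -/
def IsLarge {X : Type*} (G : Subgroup (Equiv.Perm X)) (A : Set X) : Prop :=
  ∃ E ∈ XGsets G, ball E A = Set.univ

/-- Thick subsets of `X_G`. -/
def IsThick {X : Type*} (G : Subgroup (Equiv.Perm X)) (A : Set X) : Prop :=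
  ∀ E ∈ XGsets G, ∃ a ∈ A, ball E {a} ⊆ A

/-- Thin (discrete) subsets of `X_G`. -/
def IsThin {X : Type*} (G : Subgroup (Equiv.Perm X)) (A : Set X) : Prop :=
  ∀ E ∈ XGsets G, ∃ B : Set X, B.Finite ∧ ∀ a ∈ A \ B, ball E {a} ∩ A = {a}

/-- Sparse subsets of `X_G`. -/
def IsSparse {X : Type*} (G : Subgroup (Equiv.Perm X)) (A : Set X) : Prop :=
  ∀ p : Ultrafilter X, IsFree p → (compan G p A).Finite

/-- Scattered subsets of `X_G`. -/
def IsScattered {X : Type*} (G : Subgroup (Equiv.Perm X)) (A : Set X) : Prop :=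
  ∀ Y ⊆ A, Y.Infinite →
    ∃ p : Ultrafilter X, IsFree p ∧ Y ∈ p ∧ (compan G p Y).Finite

/-- Close subsets of a coarse space. -/
def CoarseStructure.Close {X : Type*} (C : CoarseStructure X) (A B : Set X) : Prop :=
  ∃ E ∈ C.sets, A ⊆ ball E B ∧ B ⊆ ball E A

/-- Close subsets of `X_G`. -/
def CloseG {X : Type*} (G : Subgroup (Equiv.Perm X)) (A B : Set X) : Prop :=
  ∃ E ∈ XGsets G, A ⊆ ball E B ∧ B ⊆ ball E A

/-- Linked subsets of `X_G`. -/
def LinkedG {X : Type*} (G : Subgroup (Equiv.Perm X)) (A B : Set X) : Prop :=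
  (A.Finite ∧ B.Finite) ∨
    ∃ A' ⊆ A, ∃ B' ⊆ B, A'.Infinite ∧ B'.Infinite ∧ CloseG G A' B'


open Set

/-- The `n`-th block `{g_0^{ε_0} ⋯ g_n^{ε_n} x_n : ε_i ∈ {0,1}}`. -/
def pwBlock {X : Type*} (g : ℕ → Equiv.Perm X) (x : ℕ → X) (n : ℕ) : Set X :=
  {y | ∃ ε : Fin (n + 1) → Bool,
    y = ((List.ofFn fun i : Fin (n + 1) =>
      (g i) ^ (if ε i then 1 else 0)).prod : Equiv.Perm X) (x n)}

/-- A piece-wise shifted FP-set determined by the group `G`. -/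
def IsPWShiftedFP {X : Type*} (G : Subgroup (Equiv.Perm X)) (Y : Set X) : Prop :=
  ∃ g : ℕ → Equiv.Perm X, ∃ x : ℕ → X,
    (∀ n, g n ∈ G) ∧
    (∀ m n, m ≠ n → Disjoint (pwBlock g x m) (pwBlock g x n)) ∧
    (∀ n, (pwBlock g x n).ncard = 2 ^ (n + 1)) ∧
    Y = ⋃ n, pwBlock g x n

/-- The group of all self-homeomorphisms of a topological space, as a subgroup
of the permutation group. -/
def homeoSubgroup (X : Type*) [TopologicalSpace X] : Subgroup (Equiv.Perm X) where
  carrier := {g | Continuous g ∧ Continuous g.symm}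
  one_mem' := ⟨continuous_id, continuous_id⟩
  mul_mem' := by
    rintro a b ⟨ha1, ha2⟩ ⟨hb1, hb2⟩
    refine ⟨?_, ?_⟩
    · simpa [Equiv.Perm.mul_def, Equiv.coe_trans] using ha1.comp hb1
    · simpa [Equiv.Perm.mul_def, Equiv.symm_trans_apply] using (hb2.comp ha2 : _)
  inv_mem' := by
    rintro a ⟨ha1, ha2⟩
    exact ⟨ha2, by first | exact ha1 | simpa [Equiv.Perm.inv_def] using ha1⟩


/-- The parallelity relation on ultrafilters over the coarse space `X_G`. -/
def ParallelG {X : Type*} (G : Subgroup (Equiv.Perm X)) (p q : Ultrafilter X) : Prop :=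
  ∃ E ∈ XGsets G, ∀ P ∈ p, ball E P ∈ q

/-- Linked subsets of a coarse space. -/
def CoarseStructure.Linked {X : Type*} (C : CoarseStructure X) (A B : Set X) : Prop :=
  (C.Bounded A ∧ C.Bounded B) ∨
    ∃ A' ⊆ A, ∃ B' ⊆ B, ¬ C.Bounded A' ∧ ¬ C.Bounded B' ∧ C.Close A' B'

/-- The orbit `Gp` viewed as a subset of the space `X*` of free ultrafilters. -/
def freeOrbit {X : Type*} (G : Subgroup (Equiv.Perm X)) (p : Ultrafilter X) :
    Set (FreeUF X) :=
  {q | q.1 ∈ ufOrbit G p}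

/-!
An entourage of `X_G` lies in `{(x, gx) : g ∈ F}` for a finite `F ⊆ G`, so `E[P] ⊆ ⋃_{g ∈ F} gP`.
If `q` contains all these unions, then, `q` being an ultrafilter and `F` finite, a single
`g ∈ F` has `gP ∈ q` for every `P ∈ p`, which means `q = gp`. Conversely `gP ⊆ E[P]` for
`E = {(x, x), (x, gx)}`.
-/

lemma ball_mono {X : Type*} {E E' : Set (X × X)} (h : E ⊆ E') (A : Set X) :
    ball E A ⊆ ball E' A := fun _ ⟨a, ha, haE⟩ => ⟨a, ha, h haE⟩

lemma ball_entourage {X : Type*} (F : Set (Equiv.Perm X)) (A : Set X) :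
    ball (entourage F) A = ⋃ g ∈ F, ⇑g '' A := by
  ext y
  simp only [ball, entourage, Set.mem_ofPred_eq, Set.mem_iUnion, Set.mem_image, exists_prop]
  constructor
  · rintro ⟨a, ha, g, hg, rfl⟩
    exact ⟨g, hg, a, ha, rfl⟩
  · rintro ⟨g, hg, a, ha, rfl⟩
    exact ⟨a, ha, g, hg, rfl⟩

lemma entourage_mem_XGsets {X : Type*} {G : Subgroup (Equiv.Perm X)}
    {F : Finset (Equiv.Perm X)} (h1 : (1 : Equiv.Perm X) ∈ F)
    (hFG : ↑F ⊆ (G : Set (Equiv.Perm X))) : entourage ↑F ∈ XGsets G :=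
  ⟨fun _ => ⟨1, h1, rfl⟩, F, h1, hFG, subset_rfl⟩

lemma IsFree.map {X Y : Type*} {p : Ultrafilter X} (hp : IsFree p) {f : X → Y}
    (hf : f.Injective) : IsFree (p.map f) := by
  intro s hs
  rw [Ultrafilter.mem_coe, Ultrafilter.mem_map]
  exact hp (Filter.mem_cofinite.mpr (by simpa using hs.preimage hf.injOn))

lemma Ultrafilter.eq_map_of_image_mem {α β : Type*} {p : Ultrafilter α} {q : Ultrafilter β}
    {f : α → β} (h : ∀ P ∈ p, f '' P ∈ q) : q = p.map f :=
  Ultrafilter.coe_le_coe.mp fun Q hQ =>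
    Filter.mem_of_superset (h _ (Ultrafilter.mem_map.mp hQ)) (Set.image_preimage_subset f Q)

lemma Ultrafilter.exists_eq_map_of_biUnion_image_mem {α β ι : Type*} {p : Ultrafilter α}
    {q : Ultrafilter β} {F : Set ι} (hF : F.Finite) (f : ι → α → β)
    (h : ∀ P ∈ p, ⋃ i ∈ F, f i '' P ∈ q) : ∃ i ∈ F, q = p.map (f i) := by
  by_contra! hne
  have hbad : ∀ i ∈ F, ∃ P ∈ p, f i '' P ∉ q := fun i hi => by
    by_contra! hall
    exact hne i hi (eq_map_of_image_mem hall)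
  choose! P hPp hPq using hbad
  have hinter : (⋂ i ∈ F, P i) ∈ p := (Filter.biInter_mem hF).mpr hPp
  obtain ⟨i, hi, hiq⟩ := (finite_biUnion_mem_iff hF).mp (h _ hinter)
  exact hPq i hi (Filter.mem_of_superset hiq (Set.image_mono (Set.biInter_subset_of_mem hi)))

section ParallelG

variable {X : Type*} {G : Subgroup (Equiv.Perm X)} {p q : Ultrafilter X}

open scoped Classical in
lemma parallelG_self_map {g : Equiv.Perm X} (hg : g ∈ G) : ParallelG G p (p.map g) := by
  refine ⟨entourage ↑({1, g} : Finset (Equiv.Perm X)), entourage_mem_XGsets (by simp)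
    (by simp [Set.insert_subset_iff, G.one_mem, hg]), fun P hP => ?_⟩
  have himage : ⇑g '' P ∈ p.map g :=
    Ultrafilter.mem_map.mpr (Filter.mem_of_superset hP (Set.subset_preimage_image g P))
  refine Filter.mem_of_superset himage ?_
  rw [ball_entourage]
  exact Set.subset_biUnion_of_mem (u := fun h : Equiv.Perm X => ⇑h '' P) (by simp)

lemma parallelG_map_self {g : Equiv.Perm X} (hg : g ∈ G) : ParallelG G (p.map g) p := by
  have hinv : (p.map g).map ⇑g⁻¹ = p := by
    rw [Ultrafilter.map_map, ← Equiv.Perm.coe_mul, inv_mul_cancel, Equiv.Perm.coe_one,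
      Ultrafilter.map_id]
  simpa only [hinv] using parallelG_self_map (p := p.map g) (G.inv_mem hg)

lemma ParallelG.exists_eq_map (hpq : ParallelG G p q) : ∃ g ∈ G, q = p.map g := by
  obtain ⟨E, ⟨-, F, -, hFG, hEF⟩, hball⟩ := hpq
  obtain ⟨g, hgF, rfl⟩ := Ultrafilter.exists_eq_map_of_biUnion_image_mem F.finite_toSet
    (fun g : Equiv.Perm X => ⇑g) fun P hP =>
      Filter.mem_of_superset (hball P hP) ((ball_mono hEF P).trans (ball_entourage _ P).subset)
  exact ⟨g, hFG hgF, rfl⟩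

end ParallelG

theorem parallel_class_eq_orbit_general {X : Type*} (G : Subgroup (Equiv.Perm X))
    (p : Ultrafilter X) (hp : IsFree p) :
    (∀ g ∈ G, ParallelG G (Ultrafilter.map (⇑g) p) p) ∧
    (∀ q : Ultrafilter X, IsFree q → ParallelG G p q →
      ∃ g ∈ G, q = Ultrafilter.map (⇑g) p) ∧
    {q : Ultrafilter X | IsFree q ∧ ParallelG G p q} = ufOrbit G p := by
  refine ⟨fun g hg => parallelG_map_self hg, fun q _ hpq => hpq.exists_eq_map, ?_⟩
  ext q
  constructor
  · rintro ⟨-, hpq⟩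
    exact hpq.exists_eq_map
  · rintro ⟨g, hg, rfl⟩
    exact ⟨hp.map g.injective, parallelG_self_map hg⟩

/-- In `X_G`, for each free ultrafilter `p` and `g ∈ G`, `gp ∥ p`;
conversely, if `q` is a free ultrafilter parallel to `p` then `q = gp` for some
`g ∈ G`; hence the parallelity class of `p` is the orbit `Gp`. -/
theorem parallel_class_eq_orbit {X : Type*} [Infinite X] (G : Subgroup (Equiv.Perm X))
    (p : Ultrafilter X) (hp : IsFree p) :
    (∀ g ∈ G, ParallelG G (Ultrafilter.map (⇑g) p) p) ∧
    (∀ q : Ultrafilter X, IsFree q → ParallelG G p q →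
      ∃ g ∈ G, q = Ultrafilter.map (⇑g) p) ∧
    {q : Ultrafilter X | IsFree q ∧ ParallelG G p q} = ufOrbit G p :=
  parallel_class_eq_orbit_general G p hp
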